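/- arXiv:1708.05901 — 6 statements merged into one kernel-verified Lean document; each statement's English description precedes it below -/
import Mathlib

section
/- Let |v⟩ ∈ ℂ^m ⊗ ℂ^n with m ≤ n have Schmidt coefficients α₁ ≥ α₂ ≥ ⋯ ≥ α_m ≥ 0 (i.e., |v⟩ = Σⱼ αⱼ |bⱼ⟩⊗|cⱼ⟩ for orthonormal sets {|bⱼ⟩} ⊆ ℂ^m and {|cⱼ⟩} ⊆ ℂ^n). Then the matrix (|v⟩⟨v|)^Γ (the partial transpose on the second factor) has eigenvalues αⱼ² for 1 ≤ j ≤ m, ±αᵢαⱼ for 1 ≤ i < j ≤ m, and 0 with multiplicity m(n−m). -/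
open Matrix BigOperators
open scoped ComplexOrder

noncomputable section

/-- Partial transpose on the second tensor factor. -/
def partialTranspose {m n : ℕ} (A : Matrix (Fin m × Fin n) (Fin m × Fin n) ℂ) :
    Matrix (Fin m × Fin n) (Fin m × Fin n) ℂ :=
  Matrix.of fun p q => A (p.1, q.2) (q.1, p.2)

/-!
Write `M` for `v` viewed as an `m × n` matrix. The partial transpose of `|v⟩⟨v|` sends a product
vector `x ⊗ y` to `(M y) ⊗ (Mᴴ x)`. Extend `{c_j}` to an orthonormal basis `{c_j} ∪ {e_l}` of `ℂⁿ`;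
on the orthonormal basis `b_i ⊗ c̄_k`, `b_i ⊗ ē_l` of `ℂᵐ ⊗ ℂⁿ` the matrix therefore acts as the
weighted swap `b_i ⊗ c̄_k ↦ α_i α_k b_k ⊗ c̄_i` and kills every `b_i ⊗ ē_l`. So `b_j ⊗ c̄_j`,
`b_i ⊗ c̄_k ± b_k ⊗ c̄_i` (`i < k`) and `b_i ⊗ ē_l` are `m n` pairwise orthogonal eigenvectors,
with eigenvalues `α_j²`, `±α_i α_k` and `0`, and they exhaust the spectrum.
-/

def IsOrthonormal {ι κ : Type*} [DecidableEq ι] [Fintype κ] (u : ι → κ → ℂ) : Prop :=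
  ∀ i j, star (u i) ⬝ᵥ u j = if i = j then 1 else 0

section Orthonormal

variable {ι κ : Type*} [DecidableEq ι] [Fintype κ]

lemma isOrthonormal_iff_orthonormal {u : ι → κ → ℂ} :
    IsOrthonormal u ↔ Orthonormal ℂ fun i => WithLp.toLp 2 (u i) := by
  simp only [IsOrthonormal, orthonormal_iff_ite, EuclideanSpace.inner_toLp_toLp, dotProduct_comm]

lemma IsOrthonormal.star {u : ι → κ → ℂ} (hu : IsOrthonormal u) :
    IsOrthonormal fun i => star (u i) := by
  intro i j
  rw [star_dotProduct_star, dotProduct_comm, hu]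
  split_ifs <;> simp

end Orthonormal

lemma IsOrthonormal.exists_sum_extension {m n : ℕ} (hmn : m ≤ n) {c : Fin m → Fin n → ℂ}
    (hc : IsOrthonormal c) :
    ∃ F : Fin m ⊕ Fin (n - m) → Fin n → ℂ, IsOrthonormal F ∧ ∀ j, F (.inl j) = c j := by
  let v : Fin m ⊕ Fin (n - m) → EuclideanSpace ℂ (Fin n) :=
    Sum.elim (fun j => WithLp.toLp 2 (c j)) 0
  have hv : Orthonormal ℂ ((Set.range Sum.inl).domRestrict v) := by
    have := (isOrthonormal_iff_orthonormal.mp hc).comp _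
      (Equiv.ofInjective (Sum.inl (β := Fin (n - m))) Sum.inl_injective).symm.injective
    convert this using 1
    ext ⟨_, j, rfl⟩ : 1
    simp [v]
  obtain ⟨F, hF⟩ := hv.exists_orthonormalBasis_extension_of_card_eq
    (by simp [Nat.add_sub_cancel' hmn])
  refine ⟨fun i => (F i).ofLp, ?_, fun j => by simp [hF _ (Set.mem_range_self j), v]⟩
  exact isOrthonormal_iff_orthonormal.mpr F.orthonormal

open Polynomial in
lemma Matrix.roots_charpoly_diagonal {ι : Type*} [Fintype ι] [DecidableEq ι] (d : ι → ℂ) :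
    (diagonal d).charpoly.roots = Finset.univ.val.map d := by
  rw [charpoly_diagonal, roots_prod]
  · simp
  · simp [Finset.prod_ne_zero_iff, X_sub_C_ne_zero]

lemma Matrix.IsHermitian.eigenvalues_eq_of_orthogonal_eigenvectors
    {ι κ : Type*} [Fintype ι] [DecidableEq ι] [Fintype κ] [DecidableEq κ]
    {A : Matrix κ κ ℂ} (hA : A.IsHermitian) (hcard : Fintype.card ι = Fintype.card κ)
    (w : ι → κ → ℂ) (d : ι → ℝ) (hw : Pairwise fun a b => star (w a) ⬝ᵥ w b = 0)
    (hw0 : ∀ a, w a ≠ 0) (hAw : ∀ a, A *ᵥ w a = (d a : ℂ) • w a) :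
    Finset.univ.val.map hA.eigenvalues = Finset.univ.val.map d := by
  let e := (Fintype.equivOfCardEq hcard).symm
  let V : Matrix κ κ ℂ := of fun p a => w (e a) p
  have hgram : Vᴴ * V = diagonal fun a => star (w (e a)) ⬝ᵥ w (e a) := by
    ext a b
    rw [mul_apply, diagonal_apply]
    split_ifs with hab
    · subst hab; simp [V, dotProduct, mul_comm]
    · have := hw (e.injective.ne hab)
      simpa [V, dotProduct, mul_comm] using this
  have hV : IsUnit V.det := by
    refine isUnit_iff_ne_zero.mpr fun h0 => ?_
    have := congrArg det hgram
    rw [det_mul, h0, mul_zero, det_diagonal, eq_comm, Finset.prod_eq_zero_iff] at this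
    obtain ⟨a, -, ha⟩ := this
    exact hw0 _ (dotProduct_star_self_eq_zero.mp ha)
  have hAV : A * V = V * diagonal fun a => (d (e a) : ℂ) := by
    ext p a
    rw [mul_diagonal, mul_apply]
    simpa [V, mulVec, dotProduct, mul_comm] using congrFun (hAw (e a)) p
  have hchar : A.charpoly = (diagonal fun a => (d (e a) : ℂ)).charpoly := by
    let U := ((isUnit_iff_isUnit_det V).mpr hV).unit
    have hA : A = U.val * diagonal (fun a => (d (e a) : ℂ)) * U.val⁻¹ := by
      rw [IsUnit.unit_spec, ← hAV, mul_nonsing_inv_cancel_right _ _ hV]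
    rw [hA, charpoly_units_conj]
  have hroots := hA.roots_charpoly_eq_eigenvalues
  rw [hchar, roots_charpoly_diagonal] at hroots
  apply Multiset.map_injective Complex.ofReal_injective
  rw [← Multiset.map_univ_val_equiv e, Multiset.map_map, Multiset.map_map, Multiset.map_map]
  exact hroots.symm

lemma Matrix.IsHermitian.eigenvalues_eq_of_mulVec_eq_smul_involutive
    {ι κ : Type*} [Fintype ι] [DecidableEq ι] [Fintype κ] [DecidableEq κ]
    {A : Matrix κ κ ℂ} (hA : A.IsHermitian) (hcard : Fintype.card ι = Fintype.card κ)
    {u : ι → κ → ℂ} (hu : IsOrthonormal u) {σ : ι → ι} (hσ : Function.Involutive σ)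
    {l : ι → ℝ} (hl : ∀ a, l (σ a) = l a) (hAu : ∀ a, A *ᵥ u a = (l a : ℂ) • u (σ a))
    {s : ι → ℝ} (hs : ∀ a, s a ^ 2 = 1) (hs_fix : ∀ a, σ a = a → s a = 1)
    (hs_swap : ∀ a, σ a ≠ a → s (σ a) = -s a) :
    Finset.univ.val.map hA.eigenvalues = Finset.univ.val.map fun a => s a * l a := by
  -- `w a` is an eigenvector for `s a * l a` because `s a ^ 2 = 1`; `s = 1` at the fixed points of
  -- `σ` keeps `w a ≠ 0` there.
  let w a := u a + (s a : ℂ) • u (σ a)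
  have hdot : ∀ a b, star (w a) ⬝ᵥ w b = (if a = b then 1 else 0)
      + s b * (if a = σ b then 1 else 0) + s a * (if σ a = b then 1 else 0)
      + s a * s b * (if σ a = σ b then 1 else 0) := by
    intro a b
    simp only [w, star_add, star_smul, add_dotProduct, dotProduct_add, smul_dotProduct,
      dotProduct_smul, hu _ _, Complex.star_def, Complex.conj_ofReal, smul_eq_mul]
    ring
  refine hA.eigenvalues_eq_of_orthogonal_eigenvectors hcard w _ ?_ ?_ ?_
  · intro a b hab
    rw [hdot, if_neg hab, if_neg (hσ.injective.ne hab)]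
    by_cases hb : σ a = b
    · subst hb
      rw [if_pos (hσ a).symm, if_pos rfl, hs_swap a (Ne.symm hab)]
      push_cast
      ring
    · rw [if_neg hb, if_neg fun h => hb (by rw [h, hσ])]
      ring
  · intro a ha
    have h := congrArg (star (u a) ⬝ᵥ ·) ha
    simp only [w, dotProduct_add, dotProduct_smul, hu a, dotProduct_zero, smul_eq_mul] at h
    by_cases hfix : σ a = a
    · rw [if_pos hfix.symm, hs_fix a hfix] at h
      norm_num at h
    · rw [if_neg (Ne.symm hfix)] at h
      norm_num at h
  · intro a
    simp only [w, mulVec_add, mulVec_smul, hAu, hσ a, hl, smul_add, smul_smul]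
    rw [add_comm]
    congr 2
    · push_cast; ring
    · have hsa : (s a : ℂ) ^ 2 = 1 := by exact_mod_cast hs a
      push_cast
      linear_combination (-(l a : ℂ)) * hsa

def tensorVec {ι κ : Type*} (x : ι → ℂ) (y : κ → ℂ) : ι × κ → ℂ := fun p => x p.1 * y p.2

section TensorVec

variable {ι κ : Type*} [Fintype ι] [Fintype κ]

lemma star_tensorVec_dotProduct_tensorVec (x x' : ι → ℂ) (y y' : κ → ℂ) :
    star (tensorVec x y) ⬝ᵥ tensorVec x' y' = (star x ⬝ᵥ x') * (star y ⬝ᵥ y') := by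
  simp only [dotProduct, Fintype.sum_prod_type, Finset.sum_mul_sum, tensorVec, Pi.star_apply,
    star_mul']
  refine Finset.sum_congr rfl fun _ _ => Finset.sum_congr rfl fun _ _ => ?_
  ring

lemma IsOrthonormal.tensorVec {ι' κ' : Type*} [DecidableEq ι'] [DecidableEq κ']
    {x : ι' → ι → ℂ} {y : κ' → κ → ℂ} (hx : IsOrthonormal x) (hy : IsOrthonormal y) :
    IsOrthonormal fun p : ι' × κ' => tensorVec (x p.1) (y p.2) := by
  intro p q
  simp only [star_tensorVec_dotProduct_tensorVec, hx _ _, hy _ _, ite_zero_mul_ite_zero, mul_one,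
    Prod.ext_iff]

end TensorVec

lemma Matrix.IsHermitian.partialTranspose {m n : ℕ} {A : Matrix (Fin m × Fin n) (Fin m × Fin n) ℂ}
    (hA : A.IsHermitian) : (partialTranspose A).IsHermitian := by
  ext p q
  simpa [_root_.partialTranspose] using congrFun₂ hA (p.1, q.2) (q.1, p.2)

lemma partialTranspose_vecMulVec_mulVec_tensorVec {m n : ℕ} (M : Matrix (Fin m) (Fin n) ℂ)
    (x : Fin m → ℂ) (y : Fin n → ℂ) :
    partialTranspose (vecMulVec (fun p => M p.1 p.2) (star fun p => M p.1 p.2)) *ᵥ tensorVec x y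
      = tensorVec (M *ᵥ y) (Mᴴ *ᵥ x) := by
  ext p
  simp only [mulVec, dotProduct, Fintype.sum_prod_type, tensorVec, Finset.sum_mul_sum,
    partialTranspose, of_apply, vecMulVec_apply, Pi.star_apply, conjTranspose_apply]
  rw [Finset.sum_comm]
  refine Finset.sum_congr rfl fun _ _ => Finset.sum_congr rfl fun _ _ => ?_
  ring

section Schmidt

variable {ι μ ν : Type*} [Fintype ι] (α : ι → ℝ) (b : ι → μ → ℂ) (c : ι → ν → ℂ)

lemma mulVec_schmidt [Fintype ν] (y : ν → ℂ) :
    (of fun p q => ∑ j, (α j : ℂ) * b j p * c j q) *ᵥ y = ∑ j, ((α j : ℂ) * (c j ⬝ᵥ y)) • b j := by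
  ext x
  simp only [mulVec, dotProduct, of_apply, Finset.sum_mul, Finset.sum_apply, Pi.smul_apply,
    smul_eq_mul, Finset.mul_sum]
  rw [Finset.sum_comm]
  refine Finset.sum_congr rfl fun _ _ => Finset.sum_congr rfl fun _ _ => ?_
  ring

lemma conjTranspose_mulVec_schmidt [Fintype μ] (x : μ → ℂ) :
    (of fun p q => ∑ j, (α j : ℂ) * b j p * c j q)ᴴ *ᵥ x
      = ∑ j, ((α j : ℂ) * (star (b j) ⬝ᵥ x)) • star (c j) := by
  ext z
  simp only [mulVec, dotProduct, conjTranspose_apply, of_apply, star_sum, star_mul',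
    Complex.star_def, Complex.conj_ofReal, Finset.sum_mul, Finset.sum_apply, Pi.smul_apply,
    Pi.star_apply, smul_eq_mul, Finset.mul_sum]
  rw [Finset.sum_comm]
  refine Finset.sum_congr rfl fun _ _ => Finset.sum_congr rfl fun _ _ => ?_
  ring

end Schmidt

-- In the main proof `(i, .inl k)` indexes `b_i ⊗ c̄_k` and `(i, .inr l)` indexes `b_i ⊗ ē_l`.
def swapInl {α β : Type*} : α × (α ⊕ β) → α × (α ⊕ β)
  | (i, .inl k) => (k, .inl i)
  | (i, .inr l) => (i, .inr l)

lemma swapInl_involutive {α β : Type*} : Function.Involutive (swapInl (α := α) (β := β)) := by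
  rintro ⟨i, k | l⟩ <;> rfl

section SwapInlSign

variable {α β : Type*} [LinearOrder α]

def swapInlSign : α × (α ⊕ β) → ℝ
  | (i, .inl k) => if k < i then -1 else 1
  | (_, .inr _) => 1

lemma swapInlSign_sq (a : α × (α ⊕ β)) : swapInlSign a ^ 2 = 1 := by
  rcases a with ⟨i, k | l⟩
  · simp only [swapInlSign]
    split_ifs <;> norm_num
  · norm_num [swapInlSign]

lemma swapInlSign_of_swapInl_eq {a : α × (α ⊕ β)} (ha : swapInl a = a) : swapInlSign a = 1 := by
  rcases a with ⟨i, k | l⟩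
  · obtain rfl : k = i := congrArg Prod.fst ha
    simp [swapInlSign]
  · rfl

lemma swapInlSign_swapInl {a : α × (α ⊕ β)} (ha : swapInl a ≠ a) :
    swapInlSign (swapInl a) = -swapInlSign a := by
  rcases a with ⟨i, k | l⟩
  · have hki : k ≠ i := fun h => ha (by rw [h]; rfl)
    simp only [swapInl, swapInlSign]
    rcases hki.lt_or_gt with h | h <;> simp [h, h.not_gt]
  · exact absurd rfl ha

end SwapInlSign

lemma partialTranspose_schmidt_mulVec_tensorVec {m n : ℕ} {κ : Type*} [DecidableEq κ]
    (α : Fin m → ℝ) {b : Fin m → Fin m → ℂ} {c : Fin m → Fin n → ℂ}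
    {F : Fin m ⊕ κ → Fin n → ℂ} (hb : IsOrthonormal b) (hF : IsOrthonormal F)
    (hFc : ∀ j, F (.inl j) = c j) {v : Fin m × Fin n → ℂ}
    (hv : v = fun p => ∑ j, (α j : ℂ) * b j p.1 * c j p.2) (a : Fin m × (Fin m ⊕ κ)) :
    partialTranspose (vecMulVec v (star v)) *ᵥ tensorVec (b a.1) (star (F a.2))
      = ((α a.1 * Sum.elim α 0 a.2 : ℝ) : ℂ) •
          tensorVec (b (swapInl a).1) (star (F (swapInl a).2)) := by
  obtain rfl : c = fun j => F (.inl j) := funext fun j => (hFc j).symm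
  have hc : ∀ j r, F (.inl j) ⬝ᵥ star (F r) = if r = .inl j then 1 else 0 := fun j r => by
    rw [dotProduct_comm, hF]
  have hW := partialTranspose_vecMulVec_mulVec_tensorVec
    (of fun p q => ∑ j, (α j : ℂ) * b j p * F (.inl j) q) (b a.1) (star (F a.2))
  simp only [of_apply, ← hv] at hW
  rw [hW, mulVec_schmidt, conjTranspose_mulVec_schmidt]
  rcases a with ⟨i, k | l⟩ <;>
    simp only [hb _ _, hc, reduceCtorEq, Sum.inl.injEq, mul_ite, mul_one, mul_zero, ite_smul,
      zero_smul, if_false, Finset.sum_ite_eq, Finset.sum_ite_eq', Finset.sum_const_zero,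
      Finset.mem_univ, if_true] <;>
    ext p
  · simp [tensorVec, swapInl, mul_comm, mul_assoc, mul_left_comm]
  · simp [tensorVec, swapInl]

lemma Multiset.map_univ_prod_sum {α β γ R : Type*} [Fintype α] [Fintype β] [Fintype γ]
    (f : α × (β ⊕ γ) → R) :
    Finset.univ.val.map f = Finset.univ.val.map (fun p : α × β => f (p.1, .inl p.2))
      + Finset.univ.val.map (fun p : α × γ => f (p.1, .inr p.2)) := by
  rw [← Multiset.map_univ_val_equiv (Equiv.prodSumDistrib α β γ).symm, Multiset.map_map,
    ← Finset.univ_disjSum_univ, Finset.val_disjSum, Multiset.disjSum, Multiset.map_add,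
    Multiset.map_map, Multiset.map_map]
  rfl

lemma Multiset.univ_prod_self_eq_diag_add_lt_add_swap {ι : Type*} [Fintype ι] [LinearOrder ι] :
    (Finset.univ.val : Multiset (ι × ι)) = Finset.univ.val.map (fun j => (j, j))
      + (Finset.univ.filter fun p : ι × ι => p.1 < p.2).val
      + (Finset.univ.filter fun p : ι × ι => p.1 < p.2).val.map Prod.swap := by
  have hdiag : (Finset.univ.filter fun p : ι × ι => p.1 = p.2).val
      = Finset.univ.val.map (fun j => (j, j)) := by
    rw [← Finset.univ_product_univ, ← Finset.diag_eq_filter]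
    rfl
  have hswap : (Finset.univ.filter fun p : ι × ι => p.2 < p.1).val
      = (Finset.univ.filter fun p : ι × ι => p.1 < p.2).val.map Prod.swap := by
    conv_lhs => rw [Finset.filter_val, ← Multiset.map_univ_val_equiv (Equiv.prodComm ι ι)]
    rw [Multiset.filter_map]
    rfl
  rw [← hdiag, ← hswap, Finset.filter_val, Finset.filter_val, Finset.filter_val]
  conv_lhs => rw [← Multiset.filter_add_not (fun p : ι × ι => p.1 = p.2) Finset.univ.val,
    ← Multiset.filter_add_not (fun p : ι × ι => p.1 < p.2)
      (Multiset.filter (fun p : ι × ι => ¬p.1 = p.2) Finset.univ.val)]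
  simp only [Multiset.filter_filter, add_assoc]
  congr 2 <;> refine Multiset.filter_congr fun p _ => ?_
  · exact ⟨And.left, fun h => ⟨h, h.ne⟩⟩
  · exact ⟨fun h => lt_of_le_of_ne (not_lt.mp h.1) (Ne.symm h.2), fun h => ⟨h.not_gt, h.ne'⟩⟩

lemma Multiset.map_univ_prod_self_sign {ι R : Type*} [Fintype ι] [LinearOrder ι] [CommRing R]
    (α : ι → R) :
    Finset.univ.val.map (fun p : ι × ι => (if p.2 < p.1 then -1 else 1) * (α p.1 * α p.2))
      = Finset.univ.val.map (fun j => α j ^ 2)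
        + (Finset.univ.filter fun p : ι × ι => p.1 < p.2).val.map (fun p => α p.1 * α p.2)
        + (Finset.univ.filter fun p : ι × ι => p.1 < p.2).val.map
            (fun p => -(α p.1 * α p.2)) := by
  rw [Multiset.univ_prod_self_eq_diag_add_lt_add_swap, Multiset.map_add, Multiset.map_add,
    Multiset.map_map, Multiset.map_map]
  congr 1
  congr 1
  · refine Multiset.map_congr rfl fun j _ => ?_
    simp [sq]
  · refine Multiset.map_congr rfl fun p hp => ?_
    simp [(Finset.mem_filter.mp hp).2.not_gt]
  · refine Multiset.map_congr rfl fun p hp => ?_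
    simp [(Finset.mem_filter.mp hp).2, mul_comm]

theorem stmt_0_general {m n : ℕ} (hmn : m ≤ n)
    (α : Fin m → ℝ)
    (b : Fin m → Fin m → ℂ) (c : Fin m → Fin n → ℂ)
    (hb : ∀ i j, star (b i) ⬝ᵥ b j = if i = j then 1 else 0)
    (hc : ∀ i j, star (c i) ⬝ᵥ c j = if i = j then 1 else 0)
    (v : Fin m × Fin n → ℂ)
    (hv : v = fun p => ∑ j, (α j : ℂ) * b j p.1 * c j p.2) :
    ∃ hW : (partialTranspose (vecMulVec v (star v))).IsHermitian,
      Finset.univ.val.map hW.eigenvalues =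
        Finset.univ.val.map (fun j : Fin m => α j ^ 2)
        + (Finset.univ.filter (fun p : Fin m × Fin m => p.1 < p.2)).val.map
            (fun p => α p.1 * α p.2)
        + (Finset.univ.filter (fun p : Fin m × Fin m => p.1 < p.2)).val.map
            (fun p => -(α p.1 * α p.2))
        + Multiset.replicate (m * (n - m)) 0 := by
  obtain ⟨F, hF, hFc⟩ := IsOrthonormal.exists_sum_extension hmn hc
  have hW := (posSemidef_vecMulVec_self_star v).isHermitian.partialTranspose
  have hcard : Fintype.card (Fin m × (Fin m ⊕ Fin (n - m))) = Fintype.card (Fin m × Fin n) := by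
    simp [Nat.add_sub_cancel' hmn]
  have hl (a : Fin m × (Fin m ⊕ Fin (n - m))) :
      α (swapInl a).1 * Sum.elim α 0 (swapInl a).2 = α a.1 * Sum.elim α 0 a.2 := by
    rcases a with ⟨i, k | l⟩ <;> simp [swapInl, mul_comm]
  refine ⟨hW, ?_⟩
  rw [hW.eigenvalues_eq_of_mulVec_eq_smul_involutive hcard (IsOrthonormal.tensorVec hb hF.star)
    swapInl_involutive hl (partialTranspose_schmidt_mulVec_tensorVec α hb hF hFc hv)
    swapInlSign_sq (fun _ => swapInlSign_of_swapInl_eq) (fun _ => swapInlSign_swapInl),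
    Multiset.map_univ_prod_sum, ← Multiset.map_univ_prod_self_sign]
  simp [swapInlSign, Multiset.map_const']

theorem stmt_0 {m n : ℕ} (hmn : m ≤ n)
    (α : Fin m → ℝ) (hα : Antitone α) (hα0 : ∀ j, 0 ≤ α j)
    (b : Fin m → Fin m → ℂ) (c : Fin m → Fin n → ℂ)
    (hb : ∀ i j, star (b i) ⬝ᵥ b j = if i = j then 1 else 0)
    (hc : ∀ i j, star (c i) ⬝ᵥ c j = if i = j then 1 else 0)
    (v : Fin m × Fin n → ℂ)
    (hv : v = fun p => ∑ j, (α j : ℂ) * b j p.1 * c j p.2) :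
    ∃ hW : (partialTranspose (vecMulVec v (star v))).IsHermitian,
      Finset.univ.val.map hW.eigenvalues =
        Finset.univ.val.map (fun j : Fin m => α j ^ 2)
        + (Finset.univ.filter (fun p : Fin m × Fin m => p.1 < p.2)).val.map
            (fun p => α p.1 * α p.2)
        + (Finset.univ.filter (fun p : Fin m × Fin m => p.1 < p.2)).val.map
            (fun p => -(α p.1 * α p.2))
        + Multiset.replicate (m * (n - m)) 0 :=
  stmt_0_general hmn α b c hb hc v hv
end
end

section
/- If ρ ∈ M_m(ℂ) ⊗ M_n(ℂ) is separable, i.e., ρ = Σⱼ Xⱼ ⊗ Yⱼ with all Xⱼ ∈ M_m(ℂ), Yⱼ ∈ M_n(ℂ) positive semidefinite, then ρ^Γ is positive semidefinite. -/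
open Matrix BigOperators
open scoped Kronecker ComplexOrder

noncomputable section

theorem partialTranspose_sum {m n : ℕ} {ι : Type*} (s : Finset ι)
    (A : ι → Matrix (Fin m × Fin n) (Fin m × Fin n) ℂ) :
    partialTranspose (∑ i ∈ s, A i) = ∑ i ∈ s, partialTranspose (A i) := by
  ext p q
  simp only [partialTranspose, of_apply, Matrix.sum_apply]

theorem partialTranspose_kronecker {m n : ℕ} (B : Matrix (Fin m) (Fin m) ℂ)
    (C : Matrix (Fin n) (Fin n) ℂ) : partialTranspose (B ⊗ₖ C) = B ⊗ₖ Cᵀ := by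
  ext p q
  simp only [partialTranspose, of_apply, kroneckerMap_apply, transpose_apply]

theorem stmt_2 {m n : ℕ} (ρ : Matrix (Fin m × Fin n) (Fin m × Fin n) ℂ)
    (k : ℕ) (X : Fin k → Matrix (Fin m) (Fin m) ℂ) (Y : Fin k → Matrix (Fin n) (Fin n) ℂ)
    (hX : ∀ j, (X j).PosSemidef) (hY : ∀ j, (Y j).PosSemidef)
    (hρ : ρ = ∑ j, X j ⊗ₖ Y j) :
    (partialTranspose ρ).PosSemidef := by
  rw [hρ, partialTranspose_sum]
  simp only [partialTranspose_kronecker]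
  exact posSemidef_sum _ fun j _ => (hX j).kronecker (hY j).transpose
end
end

section
/- For any real numbers μ₁ ≥ μ₂ ≥ μ₃ ≥ 0 ≥ μ₄ satisfying μ₄ ≥ −μ₂ and μ₄ ≥ −√(μ₁μ₃), with μ₃ > 0, the 4×4 matrix W = P^Γ + γ₁ E₁₁ + (γ₂/2) S, where α₂ = √μ₃, α₁ = −μ₄/α₂, P is the rank-1 matrix with entries P₁₁ = α₁², P₁₄ = P₄₁ = α₁α₂, P₄₄ = α₂², γ₁ = μ₁ − μ₄²/μ₃, γ₂ = μ₂ + μ₄, E₁₁ is the (1,1) matrix unit, and S has entries S₂₂ = S₂₃ = S₃₂ = S₃₃ = 1 and zeros elsewhere, has eigenvalues μ₁, μ₂, μ₃, μ₄ with eigenvectors |0⟩⊗|0⟩, |0⟩⊗|1⟩+|1⟩⊗|0⟩, |1⟩⊗|1⟩, and |0⟩⊗|1⟩−|1⟩⊗|0⟩ respectively. -/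
/-!
The partial transpose moves the off-diagonal corner entries `α₁α₂` of `P` to the positions
`(01, 10)` and `(10, 01)`, so `P^Γ`, `E₁₁` and `S` are all "X-shaped": `a` at `(00, 00)`, `d` at
`(11, 11)`, `b` on the diagonal and `c` off the diagonal of the `{01, 10}` block. Every such
matrix has eigenvectors `|00⟩, |01⟩ + |10⟩, |11⟩, |01⟩ - |10⟩` with eigenvalues `a, b + c, d, b - c`.
For `W` these are `γ₁ + α₁², γ₂ / 2 + α₁α₂ + γ₂ / 2, α₂², γ₂ / 2 - α₁α₂`, and the choice
`α₂ = √μ₃`, `α₁α₂ = -μ₄` turns them into `μ₁, μ₂, μ₃, μ₄`.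
-/

open Matrix BigOperators
open scoped ComplexOrder

noncomputable section

def xMatrix {R : Type*} [Ring R] (a b c d : R) : Matrix (Fin 2 × Fin 2) (Fin 2 × Fin 2) R :=
  Matrix.of fun p q =>
    if p = (0, 0) ∧ q = (0, 0) then a
    else if p = (1, 1) ∧ q = (1, 1) then d
    else if p.1 ≠ p.2 ∧ q.1 ≠ q.2 then (if p = q then b else c)
    else 0

section xMatrix

variable {R : Type*} [Ring R]

theorem xMatrix_add (a b c d a' b' c' d' : R) :
    xMatrix a b c d + xMatrix a' b' c' d' = xMatrix (a + a') (b + b') (c + c') (d + d') := by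
  ext p q
  simp only [xMatrix, Matrix.add_apply, of_apply]
  split_ifs <;> simp

theorem smul_xMatrix (r a b c d : R) :
    r • xMatrix a b c d = xMatrix (r * a) (r * b) (r * c) (r * d) := by
  ext p q
  simp only [xMatrix, Matrix.smul_apply, of_apply, smul_eq_mul]
  split_ifs <;> simp

theorem xMatrix_mulVec_eigenvectors (a b c d : R) :
    xMatrix a b c d *ᵥ (fun p => if p = (0, 0) then 1 else 0) =
        a • (fun p => if p = (0, 0) then 1 else 0) ∧
      xMatrix a b c d *ᵥ (fun p => if p = (0, 1) ∨ p = (1, 0) then 1 else 0) =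
        (b + c) • (fun p => if p = (0, 1) ∨ p = (1, 0) then 1 else 0) ∧
      xMatrix a b c d *ᵥ (fun p => if p = (1, 1) then 1 else 0) =
        d • (fun p => if p = (1, 1) then 1 else 0) ∧
      xMatrix a b c d *ᵥ (fun p => if p = (0, 1) then 1 else if p = (1, 0) then -1 else 0) =
        (b - c) • (fun p => if p = (0, 1) then 1 else if p = (1, 0) then -1 else 0) := by
  refine ⟨?_, ?_, ?_, ?_⟩ <;>
  · funext ⟨i, j⟩
    fin_cases i <;> fin_cases j <;>
      simp [xMatrix, mulVec, dotProduct, Fintype.sum_prod_type, sub_eq_add_neg, add_comm]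

theorem xMatrix_one_zero_zero_zero :
    xMatrix (1 : R) 0 0 0 = Matrix.of fun p q => if p = (0, 0) ∧ q = (0, 0) then 1 else 0 := by
  ext ⟨i, j⟩ ⟨k, l⟩
  fin_cases i <;> fin_cases j <;> fin_cases k <;> fin_cases l <;> simp [xMatrix]

theorem xMatrix_zero_one_one_zero :
    xMatrix (0 : R) 1 1 0 = Matrix.of fun p q =>
      if (p = (0, 1) ∨ p = (1, 0)) ∧ (q = (0, 1) ∨ q = (1, 0)) then 1 else 0 := by
  ext ⟨i, j⟩ ⟨k, l⟩
  fin_cases i <;> fin_cases j <;> fin_cases k <;> fin_cases l <;> simp [xMatrix]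

end xMatrix

theorem partialTranspose_corners_eq_xMatrix (x y z : ℂ) :
    partialTranspose (Matrix.of fun p q =>
      if p = (0, 0) ∧ q = (0, 0) then x
      else if p = (0, 0) ∧ q = (1, 1) then y
      else if p = (1, 1) ∧ q = (0, 0) then y
      else if p = (1, 1) ∧ q = (1, 1) then z else 0) = xMatrix x 0 y z := by
  ext ⟨i, j⟩ ⟨k, l⟩
  fin_cases i <;> fin_cases j <;> fin_cases k <;> fin_cases l <;> simp [partialTranspose, xMatrix]

theorem stmt_4_general (μ₁ μ₂ μ₃ μ₄ α₁ α₂ γ₁ γ₂ : ℝ)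
    (h3 : 0 < μ₃)
    (hα₂ : α₂ = Real.sqrt μ₃) (hα₁ : α₁ = -μ₄ / α₂)
    (hγ₁ : γ₁ = μ₁ - μ₄ ^ 2 / μ₃) (hγ₂ : γ₂ = μ₂ + μ₄)
    (P E S W : Matrix (Fin 2 × Fin 2) (Fin 2 × Fin 2) ℂ)
    (hP : P = Matrix.of fun p q =>
      if p = (0, 0) ∧ q = (0, 0) then ((α₁ ^ 2 : ℝ) : ℂ)
      else if p = (0, 0) ∧ q = (1, 1) then ((α₁ * α₂ : ℝ) : ℂ)
      else if p = (1, 1) ∧ q = (0, 0) then ((α₁ * α₂ : ℝ) : ℂ)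
      else if p = (1, 1) ∧ q = (1, 1) then ((α₂ ^ 2 : ℝ) : ℂ) else 0)
    (hE : E = Matrix.of fun p q => if p = (0, 0) ∧ q = (0, 0) then (1 : ℂ) else 0)
    (hS : S = Matrix.of fun p q =>
      if (p = (0, 1) ∨ p = (1, 0)) ∧ (q = (0, 1) ∨ q = (1, 0)) then (1 : ℂ) else 0)
    (hW : W = partialTranspose P + (γ₁ : ℂ) • E + ((γ₂ / 2 : ℝ) : ℂ) • S)
    (e₁ e₂ e₃ e₄ : Fin 2 × Fin 2 → ℂ)
    (he₁ : e₁ = fun p => if p = (0, 0) then 1 else 0)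
    (he₂ : e₂ = fun p => if p = (0, 1) ∨ p = (1, 0) then 1 else 0)
    (he₃ : e₃ = fun p => if p = (1, 1) then 1 else 0)
    (he₄ : e₄ = fun p => if p = (0, 1) then 1 else if p = (1, 0) then -1 else 0) :
    W *ᵥ e₁ = (μ₁ : ℂ) • e₁ ∧ W *ᵥ e₂ = (μ₂ : ℂ) • e₂ ∧
      W *ᵥ e₃ = (μ₃ : ℂ) • e₃ ∧ W *ᵥ e₄ = (μ₄ : ℂ) • e₄ := by
  have hα₂_sq : α₂ ^ 2 = μ₃ := by rw [hα₂, Real.sq_sqrt h3.le]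
  have hα₂_ne : α₂ ≠ 0 := by rw [hα₂]; positivity
  have hα₁α₂ : α₁ * α₂ = -μ₄ := by rw [hα₁]; field_simp
  have hα₁_sq : α₁ ^ 2 = μ₄ ^ 2 / μ₃ := by rw [hα₁, div_pow, hα₂_sq, neg_sq]
  have hWx : W = xMatrix (μ₁ : ℂ) (((μ₂ + μ₄) / 2 : ℝ) : ℂ) (((μ₂ - μ₄) / 2 : ℝ) : ℂ) μ₃ := by
    rw [hW, hP, hE, hS, partialTranspose_corners_eq_xMatrix, ← xMatrix_one_zero_zero_zero,
      ← xMatrix_zero_one_one_zero, smul_xMatrix, smul_xMatrix, xMatrix_add, xMatrix_add,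
      hα₁_sq, hα₁α₂, hα₂_sq, hγ₁, hγ₂]
    congr 1 <;> push_cast <;> ring
  obtain ⟨h₁, h₂, h₃, h₄⟩ := xMatrix_mulVec_eigenvectors (μ₁ : ℂ) (((μ₂ + μ₄) / 2 : ℝ) : ℂ)
    (((μ₂ - μ₄) / 2 : ℝ) : ℂ) μ₃
  subst hWx he₁ he₂ he₃ he₄
  refine ⟨h₁, ?_, h₃, ?_⟩
  · convert h₂ using 2; push_cast; ring
  · convert h₄ using 2; push_cast; ring

theorem stmt_4 (μ₁ μ₂ μ₃ μ₄ α₁ α₂ γ₁ γ₂ : ℝ)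
    (h12 : μ₂ ≤ μ₁) (h23 : μ₃ ≤ μ₂) (h3 : 0 < μ₃) (h4 : μ₄ ≤ 0)
    (hb : -μ₂ ≤ μ₄) (hc : -Real.sqrt (μ₁ * μ₃) ≤ μ₄)
    (hα₂ : α₂ = Real.sqrt μ₃) (hα₁ : α₁ = -μ₄ / α₂)
    (hγ₁ : γ₁ = μ₁ - μ₄ ^ 2 / μ₃) (hγ₂ : γ₂ = μ₂ + μ₄)
    (P E S W : Matrix (Fin 2 × Fin 2) (Fin 2 × Fin 2) ℂ)
    (hP : P = Matrix.of fun p q =>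
      if p = (0, 0) ∧ q = (0, 0) then ((α₁ ^ 2 : ℝ) : ℂ)
      else if p = (0, 0) ∧ q = (1, 1) then ((α₁ * α₂ : ℝ) : ℂ)
      else if p = (1, 1) ∧ q = (0, 0) then ((α₁ * α₂ : ℝ) : ℂ)
      else if p = (1, 1) ∧ q = (1, 1) then ((α₂ ^ 2 : ℝ) : ℂ) else 0)
    (hE : E = Matrix.of fun p q => if p = (0, 0) ∧ q = (0, 0) then (1 : ℂ) else 0)
    (hS : S = Matrix.of fun p q =>
      if (p = (0, 1) ∨ p = (1, 0)) ∧ (q = (0, 1) ∨ q = (1, 0)) then (1 : ℂ) else 0)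
    (hW : W = partialTranspose P + (γ₁ : ℂ) • E + ((γ₂ / 2 : ℝ) : ℂ) • S)
    (e₁ e₂ e₃ e₄ : Fin 2 × Fin 2 → ℂ)
    (he₁ : e₁ = fun p => if p = (0, 0) then 1 else 0)
    (he₂ : e₂ = fun p => if p = (0, 1) ∨ p = (1, 0) then 1 else 0)
    (he₃ : e₃ = fun p => if p = (1, 1) then 1 else 0)
    (he₄ : e₄ = fun p => if p = (0, 1) then 1 else if p = (1, 0) then -1 else 0) :
    W *ᵥ e₁ = (μ₁ : ℂ) • e₁ ∧ W *ᵥ e₂ = (μ₂ : ℂ) • e₂ ∧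
      W *ᵥ e₃ = (μ₃ : ℂ) • e₃ ∧ W *ᵥ e₄ = (μ₄ : ℂ) • e₄ :=
  stmt_4_general μ₁ μ₂ μ₃ μ₄ α₁ α₂ γ₁ γ₂ h3 hα₂ hα₁ hγ₁ hγ₂ P E S W hP hE hS hW e₁ e₂ e₃ e₄ he₁ he₂
    he₃ he₄
end
end

section
/- A block-positive matrix W ∈ M₂(ℂ) ⊗ M₂(ℂ) has at most one negative eigenvalue. More generally, if W = X^Γ + Y with X, Y ∈ M₂(ℂ) ⊗ M₂(ℂ) positive semidefinite and X of rank 1, then W has at most one negative eigenvalue. -/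
open Matrix BigOperators
open scoped ComplexOrder

noncomputable section

def BlockPositive {m n : ℕ} (W : Matrix (Fin m × Fin n) (Fin m × Fin n) ℂ) : Prop :=
  ∀ (a : Fin m → ℂ) (b : Fin n → ℂ),
    0 ≤ star (fun p : Fin m × Fin n => a p.1 * b p.2) ⬝ᵥ
          W *ᵥ (fun p : Fin m × Fin n => a p.1 * b p.2)

/-
If `W` had two negative eigenvalues, it would be negative definite on the plane spanned by the
corresponding eigenvectors. Over `ℂ` every plane in `ℂ² ⊗ ℂ²` contains a nonzero product vector
`a ⊗ b`, since the singular `2 × 2` matrices form a quadric; this contradicts block positivity.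
For the decomposition `W = X^Γ + Y`, the partial transpose acts on product vectors by
conjugating the second factor, `⟨a ⊗ b, X^Γ (a ⊗ b)⟩ = ⟨a ⊗ b̄, X (a ⊗ b̄)⟩`, so `W` is block positive.
-/

theorem exists_ne_zero_quadratic_eq_zero {K : Type*} [Field K] [IsAlgClosed K] (A B C : K) :
    ∃ s t : K, (s, t) ≠ 0 ∧ A * s ^ 2 + B * s * t + C * t ^ 2 = 0 := by
  by_cases hA : A = 0
  · exact ⟨1, 0, by simp, by simp [hA]⟩
  · obtain ⟨s, hs⟩ := IsAlgClosed.exists_root (Polynomial.C A * .X ^ 2 + .C B * .X + .C C)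
      (by rw [Polynomial.degree_quadratic hA]; decide)
    refine ⟨s, 1, by simp, ?_⟩
    simpa using hs

theorem Matrix.exists_eq_vecMulVec_of_det_eq_zero {K : Type*} [Field K]
    {M : Matrix (Fin 2) (Fin 2) K} (h : M.det = 0) : ∃ a b : Fin 2 → K, M = vecMulVec a b := by
  rw [det_fin_two] at h
  by_cases h00 : M 0 0 = 0
  · by_cases h01 : M 0 1 = 0
    · refine ⟨![0, 1], M 1, ?_⟩
      ext i j
      fin_cases i <;> fin_cases j <;> simp [vecMulVec, h00, h01]
    · refine ⟨![M 0 1, M 1 1], ![M 0 0 / M 0 1, 1], ?_⟩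
      ext i j
      fin_cases i <;> fin_cases j <;> simp [vecMulVec]
      · field_simp
      · field_simp
        linear_combination -h
  · refine ⟨![M 0 0, M 1 0], ![1, M 0 1 / M 0 0], ?_⟩
    ext i j
    fin_cases i <;> fin_cases j <;> simp [vecMulVec]
    · field_simp
    · field_simp
      linear_combination h

theorem exists_ne_zero_smul_add_smul_eq_product {K : Type*} [Field K] [IsAlgClosed K]
    (u v : Fin 2 × Fin 2 → K) :
    ∃ s t : K, (s, t) ≠ 0 ∧ ∃ a b : Fin 2 → K, s • u + t • v = fun p => a p.1 * b p.2 := by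
  obtain ⟨s, t, hst, hdet⟩ := exists_ne_zero_quadratic_eq_zero
    (u (0, 0) * u (1, 1) - u (0, 1) * u (1, 0))
    (u (0, 0) * v (1, 1) + v (0, 0) * u (1, 1) - u (0, 1) * v (1, 0) - v (0, 1) * u (1, 0))
    (v (0, 0) * v (1, 1) - v (0, 1) * v (1, 0))
  let M : Matrix (Fin 2) (Fin 2) K := of fun k l => (s • u + t • v) (k, l)
  obtain ⟨a, b, hab⟩ := exists_eq_vecMulVec_of_det_eq_zero (M := M)
    (by simp only [M, det_fin_two, of_apply, Pi.add_apply, Pi.smul_apply, smul_eq_mul]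
        linear_combination hdet)
  exact ⟨s, t, hst, a, b, funext fun p => congrFun (congrFun hab p.1) p.2⟩

theorem Matrix.IsHermitian.star_dotProduct_mulVec_eigenvectorBasis_add
    {n : Type*} [Fintype n] [DecidableEq n] {W : Matrix n n ℂ} (hW : W.IsHermitian)
    {i j : n} (hij : i ≠ j) (s t : ℂ) :
    star (s • ⇑(hW.eigenvectorBasis i) + t • ⇑(hW.eigenvectorBasis j)) ⬝ᵥ
        W *ᵥ (s • ⇑(hW.eigenvectorBasis i) + t • ⇑(hW.eigenvectorBasis j)) =
      (Complex.normSq s * hW.eigenvalues i + Complex.normSq t * hW.eigenvalues j : ℝ) := by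
  have hdot : ∀ k l, star ⇑(hW.eigenvectorBasis k) ⬝ᵥ ⇑(hW.eigenvectorBasis l)
      = if k = l then 1 else 0 := fun k l => by
    rw [← orthonormal_iff_ite.mp hW.eigenvectorBasis.orthonormal k l,
      EuclideanSpace.inner_eq_star_dotProduct, dotProduct_comm]
  simp only [mulVec_add, mulVec_smul, hW.mulVec_eigenvectorBasis, star_add, star_smul,
    add_dotProduct, dotProduct_add, smul_dotProduct, dotProduct_smul, hdot, hij, hij.symm,
    if_true, if_false, ← Complex.coe_smul, smul_eq_mul]
  push_cast
  simp only [Complex.star_def, Complex.normSq_eq_conj_mul_self]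
  ring

theorem star_dotProduct_partialTranspose_mulVec {m n : ℕ}
    (X : Matrix (Fin m × Fin n) (Fin m × Fin n) ℂ) (a : Fin m → ℂ) (b : Fin n → ℂ) :
    star (fun p : Fin m × Fin n => a p.1 * b p.2) ⬝ᵥ
        partialTranspose X *ᵥ (fun p => a p.1 * b p.2) =
      star (fun p : Fin m × Fin n => a p.1 * star (b p.2)) ⬝ᵥ
        X *ᵥ (fun p => a p.1 * star (b p.2)) := by
  simp only [dotProduct, mulVec, partialTranspose, of_apply, Pi.star_apply,
    Fintype.sum_prod_type, star_mul', star_star, Finset.mul_sum]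
  refine Finset.sum_congr rfl fun i _ => ?_
  conv_lhs => enter [2, j]; rw [Finset.sum_comm]
  rw [Finset.sum_comm]
  conv_lhs => enter [2, l]; rw [Finset.sum_comm]
  exact Finset.sum_congr rfl fun _ _ => Finset.sum_congr rfl fun _ _ =>
    Finset.sum_congr rfl fun _ _ => by ring

theorem Matrix.PosSemidef.blockPositive_partialTranspose_add {m n : ℕ}
    {X Y : Matrix (Fin m × Fin n) (Fin m × Fin n) ℂ} (hX : X.PosSemidef) (hY : Y.PosSemidef) :
    BlockPositive (partialTranspose X + Y) := fun a b => by
  rw [add_mulVec, dotProduct_add, star_dotProduct_partialTranspose_mulVec]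
  exact add_nonneg (hX.dotProduct_mulVec_nonneg _) (hY.dotProduct_mulVec_nonneg _)

theorem BlockPositive.card_filter_eigenvalues_neg_le_one
    {W : Matrix (Fin 2 × Fin 2) (Fin 2 × Fin 2) ℂ} (hBP : BlockPositive W) (hW : W.IsHermitian) :
    (Finset.univ.filter fun i => hW.eigenvalues i < 0).card ≤ 1 := by
  by_contra! hcard
  obtain ⟨i, hi, j, hj, hij⟩ := Finset.one_lt_card.mp hcard
  simp only [Finset.mem_filter, Finset.mem_univ, true_and] at hi hj
  obtain ⟨s, t, hst, a, b, hab⟩ :=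
    exists_ne_zero_smul_add_smul_eq_product ⇑(hW.eigenvectorBasis i) ⇑(hW.eigenvectorBasis j)
  have hnonneg := hBP a b
  rw [← hab, hW.star_dotProduct_mulVec_eigenvectorBasis_add hij, Complex.zero_le_real] at hnonneg
  have hneg : Complex.normSq s * hW.eigenvalues i + Complex.normSq t * hW.eigenvalues j < 0 := by
    have hs := Complex.normSq_nonneg s
    have ht := Complex.normSq_nonneg t
    rcases not_and_or.mp (Prod.mk_eq_zero.not.mp hst) with h | h
    · nlinarith [Complex.normSq_pos.mpr h]
    · nlinarith [Complex.normSq_pos.mpr h]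
  exact hneg.not_ge hnonneg

theorem stmt_6 :
    (∀ W : Matrix (Fin 2 × Fin 2) (Fin 2 × Fin 2) ℂ, BlockPositive W →
      ∀ hW : W.IsHermitian,
        (Finset.univ.filter fun i => hW.eigenvalues i < 0).card ≤ 1) ∧
    (∀ W X Y : Matrix (Fin 2 × Fin 2) (Fin 2 × Fin 2) ℂ, X.PosSemidef → Y.PosSemidef →
      X.rank = 1 → W = partialTranspose X + Y →
      ∀ hW : W.IsHermitian,
        (Finset.univ.filter fun i => hW.eigenvalues i < 0).card ≤ 1) := by
  refine ⟨fun W hBP hW => hBP.card_filter_eigenvalues_neg_le_one hW, ?_⟩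
  rintro W X Y hX hY - rfl hW
  exact (hX.blockPositive_partialTranspose_add hY).card_filter_eigenvalues_neg_le_one hW
end
end

section
/- The set σ(BP₂,₂) of spectra of block-positive matrices in M₂(ℂ) ⊗ M₂(ℂ) is not convex: both (4,2,1,−2) and (4,2,−2,1) lie in σ(BP₂,₂), but their average (4,2,−1/2,−1/2) does not, since every block-positive 2⊗2 matrix has at most one negative eigenvalue. -/
open Matrix BigOperators
open scoped ComplexOrder

noncomputable section

/-- The set of spectra (as unordered assignments of eigenvalues to indices)
of block-positive matrices on `ℂ² ⊗ ℂ²`. -/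
def spectraBP22 : Set ((Fin 2 × Fin 2) → ℝ) :=
  {μ | ∃ W : Matrix (Fin 2 × Fin 2) (Fin 2 × Fin 2) ℂ, BlockPositive W ∧
    ∃ hW : W.IsHermitian,
      Finset.univ.val.map hW.eigenvalues = Finset.univ.val.map μ}

/-!
Every two-dimensional subspace of `ℂ² ⊗ ℂ²` contains a nonzero product vector: the determinant
of `x • u + y • w`, viewed as a `2 × 2` matrix, is a binary quadratic form in `(x, y)` and has a
nontrivial zero over `ℂ`. If a Hermitian `W` had two negative eigenvalues, its quadratic form
would be negative on the span of the two eigenvectors, hence on a product vector, so `W` would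
not be block-positive. So the midpoint `(4, 2, -1/2, -1/2)` is not a spectrum, while both
endpoints are orderings of the spectrum of one explicit block-positive matrix.
-/

open Polynomial

lemma exists_quadratic_form_eq_zero {K : Type*} [Field K] [IsAlgClosed K] (a b c : K) :
    ∃ x y : K, (x ≠ 0 ∨ y ≠ 0) ∧ a * x ^ 2 + b * x * y + c * y ^ 2 = 0 := by
  by_cases ha : a = 0
  · exact ⟨1, 0, by simp, by simp [ha]⟩
  obtain ⟨x, hx⟩ := IsAlgClosed.exists_root (C a * X ^ 2 + C b * X + C c)
    (by rw [degree_quadratic ha]; decide)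
  exact ⟨x, 1, Or.inr one_ne_zero, by simpa using hx⟩

lemma exists_eq_mul_of_det_eq_zero {K : Type*} [Field K] (v : Fin 2 × Fin 2 → K)
    (hdet : v (0, 0) * v (1, 1) = v (0, 1) * v (1, 0)) :
    ∃ a b : Fin 2 → K, v = fun p => a p.1 * b p.2 := by
  simp only [funext_iff, Prod.forall, Fin.forall_fin_two]
  by_cases h₀₀ : v (0, 0) = 0
  · by_cases h₀₁ : v (0, 1) = 0
    · exact ⟨![0, 1], ![v (1, 0), v (1, 1)], by simp [h₀₀, h₀₁]⟩
    · have h₁₀ : v (1, 0) = 0 := by simpa [h₀₀, h₀₁] using hdet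
      exact ⟨![v (0, 1), v (1, 1)], ![0, 1], by simp [h₀₀, h₁₀]⟩
  · refine ⟨![v (0, 0), v (1, 0)], ![1, v (0, 1) / v (0, 0)], ?_⟩
    simp only [cons_val_zero, cons_val_one, mul_one, true_and]
    exact ⟨by field_simp, by field_simp; linear_combination hdet⟩

lemma exists_smul_add_smul_eq_product {K : Type*} [Field K] [IsAlgClosed K]
    (u w : Fin 2 × Fin 2 → K) :
    ∃ x y : K, (x ≠ 0 ∨ y ≠ 0) ∧ ∃ a b : Fin 2 → K, x • u + y • w = fun p => a p.1 * b p.2 := by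
  obtain ⟨x, y, hxy, hdet⟩ := exists_quadratic_form_eq_zero
    (u (0, 0) * u (1, 1) - u (0, 1) * u (1, 0))
    (u (0, 0) * w (1, 1) + w (0, 0) * u (1, 1) - u (0, 1) * w (1, 0) - w (0, 1) * u (1, 0))
    (w (0, 0) * w (1, 1) - w (0, 1) * w (1, 0))
  refine ⟨x, y, hxy, exists_eq_mul_of_det_eq_zero _ ?_⟩
  simp only [Pi.add_apply, Pi.smul_apply, smul_eq_mul]
  linear_combination hdet

namespace Matrix.IsHermitian

variable {n : Type*} [Fintype n] [DecidableEq n] {W : Matrix n n ℂ} (hW : W.IsHermitian)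

lemma star_dotProduct_eigenvectorBasis (i j : n) :
    star ⇑(hW.eigenvectorBasis i) ⬝ᵥ ⇑(hW.eigenvectorBasis j) = if i = j then 1 else 0 := by
  rw [dotProduct_comm, ← EuclideanSpace.inner_eq_star_dotProduct]
  exact orthonormal_iff_ite.mp hW.eigenvectorBasis.orthonormal i j

lemma star_dotProduct_mulVec_smul_add_smul {p q : n} (hpq : p ≠ q) (x y : ℂ) :
    star (x • ⇑(hW.eigenvectorBasis p) + y • ⇑(hW.eigenvectorBasis q)) ⬝ᵥ
        W *ᵥ (x • ⇑(hW.eigenvectorBasis p) + y • ⇑(hW.eigenvectorBasis q)) =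
      ((Complex.normSq x * hW.eigenvalues p + Complex.normSq y * hW.eigenvalues q : ℝ) : ℂ) := by
  simp only [mulVec_add, mulVec_smul, hW.mulVec_eigenvectorBasis, star_add, star_smul,
    add_dotProduct, dotProduct_add, smul_dotProduct, dotProduct_smul,
    hW.star_dotProduct_eigenvectorBasis, if_pos, if_neg hpq, if_neg hpq.symm, smul_eq_mul,
    Complex.real_smul]
  push_cast
  rw [Complex.normSq_eq_conj_mul_self, Complex.normSq_eq_conj_mul_self, ← Complex.star_def]
  ring

end Matrix.IsHermitian

lemma BlockPositive.eq_of_eigenvalues_neg {W : Matrix (Fin 2 × Fin 2) (Fin 2 × Fin 2) ℂ}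
    (hBP : BlockPositive W) (hW : W.IsHermitian) {p q : Fin 2 × Fin 2}
    (hp : hW.eigenvalues p < 0) (hq : hW.eigenvalues q < 0) : p = q := by
  by_contra hpq
  obtain ⟨x, y, hxy, a, b, hab⟩ :=
    exists_smul_add_smul_eq_product ⇑(hW.eigenvectorBasis p) ⇑(hW.eigenvectorBasis q)
  have hnonneg := hBP a b
  rw [← hab, hW.star_dotProduct_mulVec_smul_add_smul hpq, Complex.zero_le_real] at hnonneg
  have hx := Complex.normSq_nonneg x
  have hy := Complex.normSq_nonneg y
  rcases hxy with hxy | hxy <;> have := Complex.normSq_pos.mpr hxy <;> nlinarith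

lemma card_filter_neg_eq_of_map_eq {ι : Type*} [Fintype ι] {f g : ι → ℝ}
    (h : Finset.univ.val.map f = Finset.univ.val.map g) :
    (Finset.univ.filter (f · < 0)).card = (Finset.univ.filter (g · < 0)).card := by
  simpa [Finset.card, Multiset.filter_map] using
    congr_arg (fun s => Multiset.card (s.filter (· < 0))) h

lemma eq_of_mem_spectraBP22 {μ : Fin 2 × Fin 2 → ℝ} (hμ : μ ∈ spectraBP22)
    {p q : Fin 2 × Fin 2} (hp : μ p < 0) (hq : μ q < 0) : p = q := by
  obtain ⟨W, hBP, hW, hspec⟩ := hμ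
  have hW_le : (Finset.univ.filter (hW.eigenvalues · < 0)).card ≤ 1 :=
    Finset.card_le_one.mpr fun p hp q hq =>
      hBP.eq_of_eigenvalues_neg hW (by simpa using hp) (by simpa using hq)
  rw [card_filter_neg_eq_of_map_eq hspec, Finset.card_le_one] at hW_le
  exact hW_le p (by simpa using hp) q (by simpa using hq)

lemma mem_spectraBP22_of_charpoly_eq {W : Matrix (Fin 2 × Fin 2) (Fin 2 × Fin 2) ℂ}
    (hBP : BlockPositive W) (hW : W.IsHermitian) {μ : Fin 2 × Fin 2 → ℝ}
    (h : W.charpoly = ∏ p, (X - C (μ p : ℂ))) : μ ∈ spectraBP22 := by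
  refine ⟨W, hBP, hW, Multiset.map_injective Complex.ofReal_injective ?_⟩
  have hroots : (∏ p, (X - C (μ p : ℂ))).roots = Finset.univ.val.map (fun p => (μ p : ℂ)) := by
    simpa [Multiset.map_map, Function.comp_def] using
      roots_multiset_prod_X_sub_C (Finset.univ.val.map fun p => (μ p : ℂ))
  rw [← h, hW.roots_charpoly_eq_eigenvalues] at hroots
  rw [Multiset.map_map, Multiset.map_map]
  exact hroots

/-- `finProdFinEquiv.symm` orders the basis as `|00⟩, |01⟩, |10⟩, |11⟩`. This is the partial
transpose of `|ψ⟩⟨ψ|` for `ψ = |00⟩ + 2|11⟩`, which is why it is block-positive. -/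
def witness : Matrix (Fin 2 × Fin 2) (Fin 2 × Fin 2) ℂ :=
  reindex finProdFinEquiv.symm finProdFinEquiv.symm
    !![1, 0, 0, 0; 0, 0, 2, 0; 0, 2, 0, 0; 0, 0, 0, 4]

lemma witness_isHermitian : witness.IsHermitian := by
  refine IsHermitian.reindex ?_ _
  ext i j
  fin_cases i <;> fin_cases j <;> simp

lemma witness_blockPositive : BlockPositive witness := by
  intro a b
  have hform : star (fun p : Fin 2 × Fin 2 => a p.1 * b p.2) ⬝ᵥ
      witness *ᵥ (fun p : Fin 2 × Fin 2 => a p.1 * b p.2) =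
      ((Complex.normSq (a 0 * star (b 0) + 2 * a 1 * star (b 1)) : ℝ) : ℂ) := by
    rw [Complex.normSq_eq_conj_mul_self]
    simp [dotProduct, mulVec, witness, reindex_apply, Fintype.sum_prod_type, Fin.sum_univ_two,
      finProdFinEquiv, map_ofNat]
    ring
  rw [hform]
  exact Complex.zero_le_real.mpr (Complex.normSq_nonneg _)

lemma witness_charpoly :
    witness.charpoly = (X - C 4) * (X - C 2) * (X - C 1) * (X - C (-2)) := by
  rw [witness, charpoly_reindex, charpoly, det_succ_row_zero]
  simp [Fin.sum_univ_succ, det_succ_row_zero, charmatrix_apply, diagonal_apply, Fin.succAbove]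
  ring

lemma mem_spectraBP22_of_prod_eq {μ : Fin 2 × Fin 2 → ℝ}
    (h : ∏ p, (X - C (μ p : ℂ)) = (X - C 4) * (X - C 2) * (X - C 1) * (X - C (-2))) :
    μ ∈ spectraBP22 :=
  mem_spectraBP22_of_charpoly_eq witness_blockPositive witness_isHermitian
    (witness_charpoly.trans h.symm)

theorem stmt_7 (v₁ v₂ : (Fin 2 × Fin 2) → ℝ)
    (hv₁ : v₁ = fun p => if p = (0, 0) then 4 else if p = (0, 1) then 2
      else if p = (1, 0) then 1 else -2)
    (hv₂ : v₂ = fun p => if p = (0, 0) then 4 else if p = (0, 1) then 2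
      else if p = (1, 0) then -2 else 1) :
    v₁ ∈ spectraBP22 ∧ v₂ ∈ spectraBP22 ∧
      (1 / 2 : ℝ) • v₁ + (1 / 2 : ℝ) • v₂ ∉ spectraBP22 ∧
      ¬ Convex ℝ spectraBP22 := by
  have hmem₁ : v₁ ∈ spectraBP22 := mem_spectraBP22_of_prod_eq <| by
    simp [hv₁, Fintype.prod_prod_type, Fin.prod_univ_two]
    ring
  have hmem₂ : v₂ ∈ spectraBP22 := mem_spectraBP22_of_prod_eq <| by
    simp [hv₂, Fintype.prod_prod_type, Fin.prod_univ_two]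
    ring
  have hmid : (1 / 2 : ℝ) • v₁ + (1 / 2 : ℝ) • v₂ ∉ spectraBP22 := fun hmem => by
    have h := eq_of_mem_spectraBP22 hmem (p := (1, 0)) (q := (1, 1))
      (by norm_num [hv₁, hv₂]) (by norm_num [hv₁, hv₂])
    exact absurd h (by decide)
  exact ⟨hmem₁, hmem₂, hmid, fun hconv =>
    hmid (hconv hmem₁ hmem₂ (by norm_num) (by norm_num) (by norm_num))⟩
end
end

section
/- Fix n ≥ 2 and real numbers μ₁↓ ≥ ⋯ ≥ μ_{2n}↓ and reals a, b, c with [[a,b],[b,c]] ⪰ 0. There exist z₁,…,z_{2n−1} ≥ 0 satisfying −2b + z_{2n−1} ≤ μ_{2n}↓; −z_k + z_{k−1} ≤ μ_k↓ for k = 4,…,2n−1; 2c − z₃ + z₂ ≤ μ₃↓; 2b − z₂ + z₁ ≤ μ₂↓; and 2a − z₁ ≤ μ₁↓, if and only if: −2b ≤ Σ_{j=k}^{2n} μⱼ↓ for k = 4,…,2n; 2c − 2b ≤ Σ_{j=3}^{2n} μⱼ↓; 2c ≤ Σ_{j=2}^{2n} μⱼ↓; and 2a + 2c ≤ Σ_{j=1}^{2n}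 μⱼ↓. -/
/-!
Fourier–Motzkin elimination along a chain. Each inner constraint `z (k - 1) ≤ μ k + z k` links
consecutive variables, so telescoping from the last constraint bounds every `z k` (`k ≥ 3`) by
`2 b` plus the tail sum `∑_{j > k} μ j`; feeding these bounds into the first three constraints and
into `z ≥ 0` gives the tail-sum inequalities. Conversely, the tail sums themselves, shifted by the
constants `2 b`, `2 b - 2 c` and `-2 c`, solve the system with all chain constraints tight.
-/

open Finset

theorem sum_Icc_eq_add_sum_Icc_succ {M : Type*} [AddCommMonoid M] (f : ℕ → M) {k N : ℕ}
    (hk : k ≤ N) :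
    ∑ j ∈ Icc k N, f j = f k + ∑ j ∈ Icc (k + 1) N, f j := by
  rw [Icc_add_one_left_eq_Ioc, add_sum_Ioc_eq_sum_Icc hk]

theorem le_add_sum_Icc_of_le_add_succ {z μ : ℕ → ℝ} {m N : ℕ} (hmN : m ≤ N)
    (h : ∀ k, m ≤ k → k < N → z k ≤ μ (k + 1) + z (k + 1)) :
    z m ≤ z N + ∑ j ∈ Icc (m + 1) N, μ j := by
  induction N, hmN using Nat.le_induction with
  | base => simp
  | succ N hmN ih =>
    have hN := h N hmN N.lt_succ_self
    have ih := ih fun k hmk hkN => h k hmk (hkN.trans N.lt_succ_self)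
    rw [sum_Icc_succ_top (by omega)]
    linarith

section

variable (N : ℕ) (μ : ℕ → ℝ) (a b c : ℝ)

def ChainFeasible (z : ℕ → ℝ) : Prop :=
  (∀ k, 1 ≤ k → k ≤ N - 1 → 0 ≤ z k) ∧
    -2 * b + z (N - 1) ≤ μ N ∧
    (∀ k, 4 ≤ k → k ≤ N - 1 → -z k + z (k - 1) ≤ μ k) ∧
    2 * c - z 3 + z 2 ≤ μ 3 ∧
    2 * b - z 2 + z 1 ≤ μ 2 ∧
    2 * a - z 1 ≤ μ 1

def TailSumBounds : Prop :=
  (∀ k, 4 ≤ k → k ≤ N → -2 * b ≤ ∑ j ∈ Icc k N, μ j) ∧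
    2 * c - 2 * b ≤ ∑ j ∈ Icc 3 N, μ j ∧
    2 * c ≤ ∑ j ∈ Icc 2 N, μ j ∧
    2 * a + 2 * c ≤ ∑ j ∈ Icc 1 N, μ j

variable {N μ a b c}

theorem ChainFeasible.le_two_mul_add_sum_Icc {z : ℕ → ℝ} (hz : ChainFeasible N μ a b c z)
    {k : ℕ} (hk3 : 3 ≤ k) (hkN : k ≤ N - 1) :
    z k ≤ 2 * b + ∑ j ∈ Icc (k + 1) N, μ j := by
  obtain ⟨-, hlast, hmid, -⟩ := hz
  obtain ⟨M, rfl⟩ : ∃ M, N = M + 1 := ⟨N - 1, by omega⟩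
  rw [Nat.add_sub_cancel] at hlast hmid hkN
  have htelescope := le_add_sum_Icc_of_le_add_succ (z := z) (μ := μ) hkN fun i hki hiM => by
    have := hmid (i + 1) (by omega) hiM
    rw [Nat.add_sub_cancel] at this
    linarith
  rw [sum_Icc_succ_top (by omega)]
  linarith

theorem ChainFeasible.tailSumBounds (hN : 4 ≤ N) {z : ℕ → ℝ}
    (hz : ChainFeasible N μ a b c z) :
    TailSumBounds N μ a b c := by
  have hbound {k : ℕ} (hk3 : 3 ≤ k) (hkN : k ≤ N - 1) := hz.le_two_mul_add_sum_Icc hk3 hkN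
  have hz3 := hbound le_rfl (by omega)
  obtain ⟨hnonneg, -, -, h3, h2, h1⟩ := hz
  have hz1 := hnonneg 1 le_rfl (by omega)
  have hz2 := hnonneg 2 (by omega) (by omega)
  have hT3 : 2 * c - 2 * b + z 2 ≤ ∑ j ∈ Icc 3 N, μ j := by
    rw [sum_Icc_eq_add_sum_Icc_succ μ (by omega)]
    linarith
  have hT2 : 2 * c + z 1 ≤ ∑ j ∈ Icc 2 N, μ j := by
    rw [sum_Icc_eq_add_sum_Icc_succ μ (by omega)]
    linarith
  refine ⟨fun k hk4 hkN => ?_, by linarith, by linarith, ?_⟩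
  · have hzk := hbound (k := k - 1) (by omega) (by omega)
    rw [Nat.sub_add_cancel (by omega)] at hzk
    linarith [hnonneg (k - 1) (by omega) (by omega)]
  · rw [sum_Icc_eq_add_sum_Icc_succ μ (by omega)]
    linarith

theorem TailSumBounds.chainFeasible (hN : 4 ≤ N) (h : TailSumBounds N μ a b c) :
    ChainFeasible N μ a b c fun k =>
      ∑ j ∈ Icc (k + 1) N, μ j +
        if k = 1 then -2 * c else if k = 2 then 2 * b - 2 * c else 2 * b := by
  obtain ⟨h4, h3, h2, h1⟩ := h
  refine ⟨fun k hk1 hkN => ?_, ?_, fun k hk4 hkN => ?_, ?_, ?_, ?_⟩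
  · rcases (by omega : k = 1 ∨ k = 2 ∨ 3 ≤ k) with rfl | rfl | hk3
    · simp only [if_true]
      linarith
    · simp only [if_neg (by omega : (2 : ℕ) ≠ 1), if_true]
      linarith
    · simp only [if_neg (by omega : k ≠ 1), if_neg (by omega : k ≠ 2)]
      linarith [h4 (k + 1) (by omega) (by omega)]
  · simp only [if_neg (by omega : N - 1 ≠ 1), if_neg (by omega : N - 1 ≠ 2),
      Nat.sub_add_cancel (by omega : 1 ≤ N), Icc_self, sum_singleton]
    linarith
  · simp only [if_neg (by omega : k ≠ 1), if_neg (by omega : k ≠ 2),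
      if_neg (by omega : k - 1 ≠ 1), if_neg (by omega : k - 1 ≠ 2),
      Nat.sub_add_cancel (by omega : 1 ≤ k)]
    linarith [sum_Icc_eq_add_sum_Icc_succ μ (show k ≤ N by omega)]
  · simp only [if_neg (by omega : (3 : ℕ) ≠ 1), if_neg (by omega : (3 : ℕ) ≠ 2),
      if_neg (by omega : (2 : ℕ) ≠ 1), if_true]
    linarith [sum_Icc_eq_add_sum_Icc_succ μ (show 3 ≤ N by omega)]
  · simp only [if_neg (by omega : (2 : ℕ) ≠ 1), if_true]
    linarith [sum_Icc_eq_add_sum_Icc_succ μ (show 2 ≤ N by omega)]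
  · simp only [if_true]
    linarith [sum_Icc_eq_add_sum_Icc_succ μ (show 1 ≤ N by omega)]

theorem exists_chainFeasible_iff (hN : 4 ≤ N) :
    (∃ z, ChainFeasible N μ a b c z) ↔ TailSumBounds N μ a b c :=
  ⟨fun ⟨_, hz⟩ => hz.tailSumBounds hN, fun h => ⟨_, h.chainFeasible hN⟩⟩

end

theorem stmt_19_general (n : ℕ) (hn : 2 ≤ n) (μ : ℕ → ℝ)
    (a b c : ℝ) :
    (∃ z : ℕ → ℝ,
        (∀ k, 1 ≤ k → k ≤ 2 * n - 1 → 0 ≤ z k) ∧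
        -2 * b + z (2 * n - 1) ≤ μ (2 * n) ∧
        (∀ k, 4 ≤ k → k ≤ 2 * n - 1 → -z k + z (k - 1) ≤ μ k) ∧
        2 * c - z 3 + z 2 ≤ μ 3 ∧
        2 * b - z 2 + z 1 ≤ μ 2 ∧
        2 * a - z 1 ≤ μ 1) ↔
      ((∀ k, 4 ≤ k → k ≤ 2 * n → -2 * b ≤ ∑ j ∈ Finset.Icc k (2 * n), μ j) ∧
        2 * c - 2 * b ≤ ∑ j ∈ Finset.Icc 3 (2 * n), μ j ∧
        2 * c ≤ ∑ j ∈ Finset.Icc 2 (2 * n), μ j ∧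
        2 * a + 2 * c ≤ ∑ j ∈ Finset.Icc 1 (2 * n), μ j) :=
  exists_chainFeasible_iff (by omega)

theorem stmt_19 (n : ℕ) (hn : 2 ≤ n) (μ : ℕ → ℝ)
    (hsort : ∀ j k, 1 ≤ j → j ≤ k → k ≤ 2 * n → μ k ≤ μ j)
    (a b c : ℝ) (habc : (!![a, b; b, c] : Matrix (Fin 2) (Fin 2) ℝ).PosSemidef) :
    (∃ z : ℕ → ℝ,
        (∀ k, 1 ≤ k → k ≤ 2 * n - 1 → 0 ≤ z k) ∧
        -2 * b + z (2 * n - 1) ≤ μ (2 * n) ∧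
        (∀ k, 4 ≤ k → k ≤ 2 * n - 1 → -z k + z (k - 1) ≤ μ k) ∧
        2 * c - z 3 + z 2 ≤ μ 3 ∧
        2 * b - z 2 + z 1 ≤ μ 2 ∧
        2 * a - z 1 ≤ μ 1) ↔
      ((∀ k, 4 ≤ k → k ≤ 2 * n → -2 * b ≤ ∑ j ∈ Finset.Icc k (2 * n), μ j) ∧
        2 * c - 2 * b ≤ ∑ j ∈ Finset.Icc 3 (2 * n), μ j ∧
        2 * c ≤ ∑ j ∈ Finset.Icc 2 (2 * n), μ j ∧
        2 * a + 2 * c ≤ ∑ j ∈ Finset.Icc 1 (2 * n), μ j) :=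
  stmt_19_general n hn μ a b c
end
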